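/- arXiv:2003.12574 — 3 statements merged into one kernel-verified Lean document; each statement's English description precedes it below -/
import Mathlib

section
/- If a Riemannian manifold (M,g) is an almost η-Ricci soliton (V,λ,μ) whose potential vector field V is torqued, i.e. ∇_X V = a X + ψ(X) V with ψ(V) = 0, and η is the g-dual 1-form of V, then Ric = (λ − a) g + μ η⊗η − (1/2)(ψ⊗η + η⊗ψ); in particular, M is a mixed generalized quasi-Einstein manifold with associated functions (λ − a), μ, 0 and −1/2 relative to the 1-forms η and ψ, whose g-dual vector fields V and U are g-orthogonal. -/
/-!
Abstract model of the geometric data of an `n`-dimensional Riemannian manifold: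
`M` is the set of points, `VF` is the space of (smooth) vector fields, and smooth
real-valued functions on `M` are modelled as elements of `M → ℝ`.  The structure
records the metric, the directional derivative, the Lie bracket, the Levi-Civita
connection, the Ricci tensor, the scalar curvature and a pointwise orthonormal
frame, together with their standard defining properties.
-/
structure RiemannianSetting (n : ℕ) (M : Type) (VF : Type)
    [AddCommGroup VF] [Module ℝ VF] : Type where
  /-- multiplication of a vector field by a smooth function -/
  fsmul : (M → ℝ) → VF → VF
  /-- derivative of a function in the direction of a vector field -/
  dd : VF → (M → ℝ) → M → ℝ
  /-- the Riemannian metric -/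
  g : VF → VF → M → ℝ
  /-- the Lie bracket of vector fields -/
  bracket : VF → VF → VF
  /-- the Levi-Civita connection -/
  conn : VF → VF → VF
  /-- the Ricci curvature tensor field -/
  ric : VF → VF → M → ℝ
  /-- the scalar curvature -/
  scal : M → ℝ
  /-- a pointwise orthonormal frame -/
  frame : M → Fin n → VF
  g_symm : ∀ X Y, g X Y = g Y X
  g_add_left : ∀ X Y Z, g (X + Y) Z = g X Z + g Y Z
  g_smul_left : ∀ (r : ℝ) (X Y : VF), g (r • X) Y = r • g X Y
  g_fsmul_left : ∀ f X Y, g (fsmul f X) Y = f * g X Y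
  g_nonneg : ∀ X p, 0 ≤ g X X p
  fsmul_one : ∀ X, fsmul (fun _ => 1) X = X
  fsmul_add : ∀ f X Y, fsmul f (X + Y) = fsmul f X + fsmul f Y
  fsmul_add' : ∀ f₁ f₂ X, fsmul (f₁ + f₂) X = fsmul f₁ X + fsmul f₂ X
  dd_add : ∀ X f₁ f₂, dd X (f₁ + f₂) = dd X f₁ + dd X f₂
  dd_mul : ∀ X f₁ f₂, dd X (f₁ * f₂) = dd X f₁ * f₂ + f₁ * dd X f₂
  conn_add_left : ∀ X Y Z, conn (X + Y) Z = conn X Z + conn Y Z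
  conn_add_right : ∀ X Y Z, conn X (Y + Z) = conn X Y + conn X Z
  conn_fsmul_left : ∀ f X Y, conn (fsmul f X) Y = fsmul f (conn X Y)
  conn_leibniz : ∀ f X Y, conn X (fsmul f Y) = fsmul (dd X f) Y + fsmul f (conn X Y)
  conn_metric : ∀ X Y Z, dd X (g Y Z) = g (conn X Y) Z + g Y (conn X Z)
  torsion_free : ∀ X Y, conn X Y - conn Y X = bracket X Y
  frame_orthonormal : ∀ p i j, g (frame p i) (frame p j) p = if i = j then 1 else 0
  ric_trace : ∀ X Y p, ric X Y p = ∑ i : Fin n,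
      g (conn (frame p i) (conn X Y) - conn X (conn (frame p i) Y)
          - conn (bracket (frame p i) X) Y) (frame p i) p
  scal_trace : ∀ p, scal p = ∑ i : Fin n, ric (frame p i) (frame p i) p
  ric_symm : ∀ X Y, ric X Y = ric Y X

namespace RiemannianSetting

variable {n : ℕ} {M VF : Type} [AddCommGroup VF] [Module ℝ VF]

/-- The Lie derivative of the metric along `V`:
`(£_V g)(X,Y) = g(∇_X V, Y) + g(∇_Y V, X)`. -/
def lieg (G : RiemannianSetting n M VF) (V X Y : VF) : M → ℝ :=
  G.g (G.conn X V) Y + G.g (G.conn Y V) X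

/-- The `g`-dual `1`-form of a vector field `V`. -/
def dual (G : RiemannianSetting n M VF) (V X : VF) : M → ℝ := G.g V X

/-- The squared norm `|V|²` of a vector field. -/
def nsq (G : RiemannianSetting n M VF) (V : VF) : M → ℝ := G.g V V

/-- `X` is the gradient of `f`:  `g(X, Y) = Y(f)` for every vector field `Y`. -/
def IsGradient (G : RiemannianSetting n M VF) (f : M → ℝ) (X : VF) : Prop :=
  ∀ Y, G.g X Y = G.dd Y f

/-- A nowhere vanishing vector field. -/
def NowhereZero (G : RiemannianSetting n M VF) (V : VF) : Prop := ∀ p, G.g V V p ≠ 0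

/-- `(V, lam, mu)` is an almost `η`-Ricci soliton:
`(1/2) £_V g + Ric = λ g + μ η ⊗ η`. -/
def IsEtaRicciSoliton (G : RiemannianSetting n M VF) (V : VF) (lam mu : M → ℝ)
    (eta : VF → M → ℝ) : Prop :=
  ∀ X Y, (1 / 2 : ℝ) • G.lieg V X Y + G.ric X Y = lam * G.g X Y + mu * eta X * eta Y

/-- `(V, lam)` is an almost Ricci soliton: `(1/2) £_V g + Ric = λ g`. -/
def IsRicciSoliton (G : RiemannianSetting n M VF) (V : VF) (lam : M → ℝ) : Prop :=
  ∀ X Y, (1 / 2 : ℝ) • G.lieg V X Y + G.ric X Y = lam * G.g X Y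

/-- `(V, lam, mu)` is an almost `η`-Yamabe soliton:
`(1/2) £_V g = (scal − λ) g + μ η ⊗ η`. -/
def IsEtaYamabeSoliton (G : RiemannianSetting n M VF) (V : VF) (lam mu : M → ℝ)
    (eta : VF → M → ℝ) : Prop :=
  ∀ X Y, (1 / 2 : ℝ) • G.lieg V X Y = (G.scal - lam) * G.g X Y + mu * eta X * eta Y

/-- `V` is torse-forming: `∇_X V = a X + ψ(X) V` for every vector field `X`. -/
def IsTorseForming (G : RiemannianSetting n M VF) (V : VF) (a : M → ℝ)
    (psi : VF → M → ℝ) : Prop :=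
  ∀ X, G.conn X V = G.fsmul a X + G.fsmul (psi X) V

end RiemannianSetting

namespace RiemannianSetting

variable {n : ℕ} {M VF : Type} [AddCommGroup VF] [Module ℝ VF]
  (G : RiemannianSetting n M VF)

theorem lieg_of_isTorseForming {V : VF} {a : M → ℝ} {psi : VF → M → ℝ}
    (htf : G.IsTorseForming V a psi) (X Y : VF) :
    G.lieg V X Y = 2 * a * G.g X Y + psi X * G.dual V Y + psi Y * G.dual V X := by
  have hYX : G.g Y X = G.g X Y := G.g_symm Y X
  simp only [lieg, dual, htf X, htf Y, g_add_left, g_fsmul_left, hYX]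
  ring

theorem ric_eq_of_isEtaRicciSoliton_of_isTorseForming {V : VF} {lam mu a : M → ℝ}
    {psi : VF → M → ℝ} (htf : G.IsTorseForming V a psi)
    (hsol : G.IsEtaRicciSoliton V lam mu (G.dual V)) (X Y : VF) :
    G.ric X Y = (lam - a) * G.g X Y + mu * G.dual V X * G.dual V Y
      - (1 / 2 : ℝ) • (G.dual V X * psi Y + psi X * G.dual V Y) := by
  have h := hsol X Y
  rw [G.lieg_of_isTorseForming htf] at h
  funext p
  have hp := congrFun h p
  simp only [Pi.add_apply, Pi.sub_apply, Pi.mul_apply, Pi.smul_apply, smul_eq_mul,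
    Pi.ofNat_apply] at hp ⊢
  linarith

end RiemannianSetting

/-- If a Riemannian manifold `(M,g)` is an almost `η`-Ricci soliton
`(V, λ, μ)` whose potential vector field `V` is torqued, i.e.
`∇_X V = a X + ψ(X) V` with `ψ(V) = 0`, and `η` is the `g`-dual `1`-form of `V`, then
`Ric = (λ − a) g + μ η ⊗ η − (1/2)(ψ ⊗ η + η ⊗ ψ)`; in particular, `M` is a mixed
generalized quasi-Einstein manifold with associated functions `(λ − a)`, `μ`, `0`
and `−1/2` relative to the `1`-forms `η` and `ψ`, whose `g`-dual vector fields `V`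
and `U` are `g`-orthogonal. -/
theorem mixed_generalized_quasi_einstein_of_torqued_potential
    {n : ℕ} {M VF : Type} [AddCommGroup VF] [Module ℝ VF]
    (G : RiemannianSetting n M VF) (V U : VF) (lam mu a : M → ℝ)
    (psi : VF → M → ℝ)
    (htf : G.IsTorseForming V a psi)
    (htorqued : psi V = 0)
    (hU : ∀ X, G.g U X = psi X)
    (hsol : G.IsEtaRicciSoliton V lam mu (G.dual V)) :
    (∀ X Y p, G.ric X Y p =
        (lam p - a p) * G.g X Y p + mu p * G.dual V X p * G.dual V Y p
          + 0 * psi X p * psi Y p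
          + (-(1 / 2 : ℝ)) * (G.dual V X p * psi Y p + psi X p * G.dual V Y p)) ∧
    G.g V U = 0 := by
  refine ⟨fun X Y p => ?_, by rw [G.g_symm, hU, htorqued]⟩
  rw [G.ric_eq_of_isEtaRicciSoliton_of_isTorseForming htf hsol X Y]
  simp only [Pi.sub_apply, Pi.add_apply, Pi.mul_apply, Pi.smul_apply, smul_eq_mul]
  ring
end

section
/- If a Riemannian manifold (M,g) is an almost η-Ricci soliton (V,λ,μ) whose potential vector field V = grad(σ) is torse-forming with ∇_X V = a X + δ dσ(X) V (equivalently, Hess(σ) = a g + δ dσ⊗dσ) for a smooth function σ on M, and η = dσ is the g-dual 1-form of V, then Ric = (λ − a) g + (μ − δ) dσ⊗dσ; that is, M is a quasi-Einstein manifold with associated functions (λ − a) and (μ − δ). -/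
namespace RiemannianSetting

variable {n : ℕ} {M VF : Type} [AddCommGroup VF] [Module ℝ VF] (G : RiemannianSetting n M VF)

theorem lieg_eq_of_isTorseForming {V : VF} {a : M → ℝ} {psi : VF → M → ℝ}
    (h : G.IsTorseForming V a psi) (X Y : VF) :
    G.lieg V X Y = 2 * a * G.g X Y + psi X * G.dual V Y + psi Y * G.dual V X := by
  simp only [lieg, dual, h X, h Y, g_add_left, g_fsmul_left, G.g_symm Y X]
  ring

theorem lieg_eq_of_isGradient_of_isTorseForming {V : VF} {a delta sigma : M → ℝ}
    (hgrad : G.IsGradient sigma V) (h : G.IsTorseForming V a (fun X => delta * G.dd X sigma))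
    (X Y : VF) :
    G.lieg V X Y = 2 * a * G.g X Y + 2 * delta * G.dd X sigma * G.dd Y sigma := by
  rw [G.lieg_eq_of_isTorseForming h, dual, dual, hgrad, hgrad]
  ring

theorem ric_eq_of_isEtaRicciSoliton_of_lieg_eq {V : VF} {lam mu a delta : M → ℝ}
    {eta : VF → M → ℝ} (hsol : G.IsEtaRicciSoliton V lam mu eta)
    (hlie : ∀ X Y, G.lieg V X Y = 2 * a * G.g X Y + 2 * delta * eta X * eta Y) (X Y : VF) :
    G.ric X Y = (lam - a) * G.g X Y + (mu - delta) * eta X * eta Y := by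
  rw [eq_sub_of_add_eq' (hsol X Y), hlie]
  funext p
  simp only [Pi.add_apply, Pi.sub_apply, Pi.mul_apply, Pi.smul_apply, Pi.ofNat_apply,
    smul_eq_mul]
  ring

end RiemannianSetting

/-- If a Riemannian manifold `(M,g)` is an almost `η`-Ricci soliton
`(V, λ, μ)` whose potential vector field `V = grad(σ)` is torse-forming with
`∇_X V = a X + δ dσ(X) V` for a smooth function `σ` on `M`, and `η = dσ` is the
`g`-dual `1`-form of `V`, then `Ric = (λ − a) g + (μ − δ) dσ ⊗ dσ`; that is, `M` is
quasi-Einstein with associated functions `(λ − a)` and `(μ − δ)`. -/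
theorem quasi_einstein_of_gradient_torse_forming_potential
    {n : ℕ} {M VF : Type} [AddCommGroup VF] [Module ℝ VF]
    (G : RiemannianSetting n M VF) (V : VF) (lam mu a delta sigma : M → ℝ)
    (hgrad : G.IsGradient sigma V)
    (htf : ∀ X : VF, G.conn X V = G.fsmul a X + G.fsmul (delta * G.dd X sigma) V)
    (hsol : G.IsEtaRicciSoliton V lam mu (fun X => G.dd X sigma)) :
    ∀ X Y p, G.ric X Y p =
      (lam p - a p) * G.g X Y p + (mu p - delta p) * G.dd X sigma p * G.dd Y sigma p := by
  intro X Y p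
  have hlie := G.lieg_eq_of_isGradient_of_isTorseForming hgrad htf
  exact congrFun (G.ric_eq_of_isEtaRicciSoliton_of_lieg_eq hsol hlie X Y) p
end

section
/- Let M be a submanifold isometrically immersed into a Riemannian manifold (M̃,g̃) with induced metric g and second fundamental form h, let V be a torse-forming vector field on M̃ with ∇̃_X V = a X + ψ(X) V, and let η be the g-dual 1-form of the tangential component V^T of V. Then (M,g) is an almost η-Ricci soliton (V^T,λ,μ) if and only if the Ricci tensor of M satisfies Ric_M(X,Y) = (λ − a) g(X,Y) − g̃(h(X,Y), V^⊥) + μ η(X)η(Y) − (1/2)[ψ(X)η(Y) + η(X)ψ(Y)] for all vector fields X, Y tangent to M. -/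
/-- Abstract data of a submanifold `M` isometrically immersed into a Riemannian
manifold `(M̃, g̃)`:  `VF` is the space of vector fields tangent to `M`, `W` is the
space of vector fields of `M̃` restricted along `M`, `gt` is the ambient metric,
`incl` the inclusion of tangent fields, `tang` the tangential projection, `Dconn`
the ambient Levi-Civita connection along tangent directions, and `sff` the second
fundamental form (the Gauss formula `∇̃_X Y = ∇_X Y + h(X,Y)` holds). -/
structure SubmanifoldSetting (n : ℕ) (M : Type) (VF W : Type)
    [AddCommGroup VF] [Module ℝ VF] [AddCommGroup W] [Module ℝ W] extends
    RiemannianSetting n M VF where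
  /-- the ambient metric along `M` -/
  gt : W → W → M → ℝ
  /-- multiplication of an ambient field by a function -/
  fsmulW : (M → ℝ) → W → W
  /-- inclusion of tangent vector fields into ambient vector fields -/
  incl : VF →ₗ[ℝ] W
  /-- tangential projection -/
  tang : W →ₗ[ℝ] VF
  /-- the ambient Levi-Civita connection along tangent directions of `M` -/
  Dconn : VF → W → W
  /-- the second fundamental form `h` -/
  sff : VF → VF → W
  gt_symm : ∀ v w, gt v w = gt w v
  gt_add_left : ∀ u v w, gt (u + v) w = gt u w + gt v w
  gt_fsmul_left : ∀ f v w, gt (fsmulW f v) w = f * gt v w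
  /-- the metric of `M` is induced by the ambient metric -/
  g_induced : ∀ X Y, g X Y = gt (incl X) (incl Y)
  tang_incl : ∀ X, tang (incl X) = X
  /-- the normal component `w − (tang w)` is `g̃`-orthogonal to `M` -/
  tang_proj : ∀ w X, gt (w - incl (tang w)) (incl X) = 0
  /-- the Gauss formula `∇̃_X Y = ∇_X Y + h(X, Y)` -/
  gauss : ∀ X Y, Dconn X (incl Y) = incl (conn X Y) + sff X Y
  sff_symm : ∀ X Y, sff X Y = sff Y X
  /-- the second fundamental form is normal-valued -/
  sff_normal : ∀ X Y Z, gt (sff X Y) (incl Z) = 0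
  Dconn_add : ∀ X v w, Dconn X (v + w) = Dconn X v + Dconn X w
  Dconn_metric : ∀ X v w, dd X (gt v w) = gt (Dconn X v) w + gt v (Dconn X w)

namespace SubmanifoldSetting

variable {n : ℕ} {M VF W : Type} [AddCommGroup VF] [Module ℝ VF]
  [AddCommGroup W] [Module ℝ W]

/-- the normal component `V^⊥` of an ambient vector field along `M` -/
def nor (S : SubmanifoldSetting n M VF W) (w : W) : W := w - S.incl (S.tang w)

end SubmanifoldSetting

/-! Splitting `V = V^T + V^⊥`, the Gauss formula for `V^T` and the Weingarten formula for `V^⊥`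
give `g(∇_X V^T, Y) = a g(X,Y) + ψ(X) η(Y) + g̃(h(X,Y), V^⊥)`. The last term is symmetric in
`X, Y`, so symmetrizing yields `£_{V^T} g`, and the soliton equation becomes the stated formula
for `Ric`. -/

namespace RiemannianSetting

variable {n : ℕ} {M VF : Type} [AddCommGroup VF] [Module ℝ VF]

theorem dd_zero (G : RiemannianSetting n M VF) (X : VF) : G.dd X 0 = 0 := by
  simpa using G.dd_add X 0 0

theorem isEtaRicciSoliton_iff_ric_eq (G : RiemannianSetting n M VF) {V : VF}
    {lam mu a : M → ℝ} {psi eta : VF → M → ℝ} {B : VF → VF → M → ℝ}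
    (hB : ∀ X Y, B X Y = B Y X)
    (hV : ∀ X Y, G.g (G.conn X V) Y = a * G.g X Y + psi X * eta Y + B X Y) :
    G.IsEtaRicciSoliton V lam mu eta ↔
      ∀ X Y p, G.ric X Y p = (lam p - a p) * G.g X Y p - B X Y p + mu p * eta X p * eta Y p
        - (1 / 2 : ℝ) * (psi X p * eta Y p + eta X p * psi Y p) := by
  have hlie : ∀ X Y p, G.lieg V X Y p
      = 2 * a p * G.g X Y p + psi X p * eta Y p + eta X p * psi Y p + 2 * B X Y p := by
    intro X Y p
    simp only [lieg, hV, G.g_symm Y X, hB Y X, Pi.add_apply, Pi.mul_apply]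
    ring
  simp only [IsEtaRicciSoliton, funext_iff, Pi.add_apply, Pi.mul_apply, Pi.smul_apply,
    smul_eq_mul, hlie]
  refine forall₂_congr fun X Y => forall_congr' fun p => ?_
  constructor <;> intro h <;> linarith

end RiemannianSetting

namespace SubmanifoldSetting

variable {n : ℕ} {M VF W : Type} [AddCommGroup VF] [Module ℝ VF]
  [AddCommGroup W] [Module ℝ W] (S : SubmanifoldSetting n M VF W)

theorem gt_add_right (u v w : W) : S.gt u (v + w) = S.gt u v + S.gt u w := by
  rw [S.gt_symm, S.gt_add_left, S.gt_symm v u, S.gt_symm w u]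

theorem incl_tang_add_nor (w : W) : S.incl (S.tang w) + S.nor w = w := by
  rw [nor]; abel

theorem gt_nor_incl (w : W) (X : VF) : S.gt (S.nor w) (S.incl X) = 0 :=
  S.tang_proj w X

theorem gt_incl_eq_dual_tang (w : W) (Y : VF) :
    S.gt w (S.incl Y) = S.toRiemannianSetting.dual (S.tang w) Y := by
  conv_lhs => rw [← S.incl_tang_add_nor w]
  rw [S.gt_add_left, S.gt_nor_incl, add_zero, ← S.g_induced, RiemannianSetting.dual]

theorem gt_Dconn_incl (X Y Z : VF) :
    S.gt (S.Dconn X (S.incl Z)) (S.incl Y) = S.g (S.conn X Z) Y := by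
  rw [S.gauss, S.gt_add_left, S.sff_normal, add_zero, ← S.g_induced]

/-- The Weingarten formula, tested against tangent fields. -/
theorem gt_Dconn_nor (X Y : VF) (w : W) :
    S.gt (S.Dconn X (S.nor w)) (S.incl Y) = -S.gt (S.sff X Y) (S.nor w) := by
  have hmetric := S.Dconn_metric X (S.nor w) (S.incl Y)
  rw [S.gt_nor_incl, S.dd_zero, S.gauss, S.gt_add_right, S.gt_nor_incl,
    zero_add, S.gt_symm (S.nor w)] at hmetric
  exact eq_neg_of_add_eq_zero_left hmetric.symm

theorem g_conn_tang (X Y : VF) (w : W) :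
    S.g (S.conn X (S.tang w)) Y = S.gt (S.Dconn X w) (S.incl Y) + S.gt (S.sff X Y) (S.nor w) := by
  have hsplit : S.Dconn X w = S.Dconn X (S.incl (S.tang w)) + S.Dconn X (S.nor w) := by
    rw [← S.Dconn_add, S.incl_tang_add_nor]
  rw [hsplit, S.gt_add_left, S.gt_Dconn_incl, S.gt_Dconn_nor, neg_add_cancel_right]

theorem g_conn_tang_of_torseForming {V : W} {a : M → ℝ} {psi : VF → M → ℝ}
    (htf : ∀ X : VF, S.Dconn X V = S.fsmulW a (S.incl X) + S.fsmulW (psi X) V) (X Y : VF) :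
    S.g (S.conn X (S.tang V)) Y = a * S.g X Y
      + psi X * S.toRiemannianSetting.dual (S.tang V) Y + S.gt (S.sff X Y) (S.nor V) := by
  rw [S.g_conn_tang, htf, S.gt_add_left, S.gt_fsmul_left, S.gt_fsmul_left, ← S.g_induced,
    S.gt_incl_eq_dual_tang]

end SubmanifoldSetting

/-- Let `M` be a submanifold isometrically immersed into a
Riemannian manifold `(M̃, g̃)` with induced metric `g` and second fundamental form
`h`, let `V` be a torse-forming vector field on `M̃` (`∇̃_X V = a X + ψ(X) V`), and
let `η` be the `g`-dual `1`-form of the tangential component `V^T` of `V`.  Then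
`(M,g)` is an almost `η`-Ricci soliton `(V^T, λ, μ)` if and only if
`Ric_M(X,Y) = (λ − a) g(X,Y) − g̃(h(X,Y), V^⊥) + μ η(X)η(Y)
  − (1/2)[ψ(X)η(Y) + η(X)ψ(Y)]` for all `X, Y` tangent to `M`. -/
theorem submanifold_almost_eta_ricci_soliton_iff
    {n : ℕ} {M VF W : Type} [AddCommGroup VF] [Module ℝ VF]
    [AddCommGroup W] [Module ℝ W]
    (S : SubmanifoldSetting n M VF W) (V : W) (lam mu a : M → ℝ)
    (psi : VF → M → ℝ)
    (htf : ∀ X : VF, S.Dconn X V = S.fsmulW a (S.incl X) + S.fsmulW (psi X) V) :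
    S.toRiemannianSetting.IsEtaRicciSoliton (S.tang V) lam mu
        (S.toRiemannianSetting.dual (S.tang V)) ↔
      ∀ X Y p, S.ric X Y p =
        (lam p - a p) * S.g X Y p - S.gt (S.sff X Y) (S.nor V) p
          + mu p * S.toRiemannianSetting.dual (S.tang V) X p
              * S.toRiemannianSetting.dual (S.tang V) Y p
          - (1 / 2 : ℝ) * (psi X p * S.toRiemannianSetting.dual (S.tang V) Y p
              + S.toRiemannianSetting.dual (S.tang V) X p * psi Y p) :=
  S.toRiemannianSetting.isEtaRicciSoliton_iff_ric_eq
    (fun X Y => by rw [S.sff_symm]) (S.g_conn_tang_of_torseForming htf)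
end
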